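/- Let N ≥ 2, let p be a full-support prior on {x_1,…,x_N} ordered so that p_1 ≥ … ≥ p_N > 0, and let 0 < ε < ε_1(p) := −log(1 − p_N). Let P be an extreme point of the convex set M_N(ε) such that P_Y(j) > 0 for every column j. Then for each j ∈ {1,…,N} there exists a unique index r(j) ∈ {1,…,N} such that P(i,j) = e^ε·P_Y(j) for all i ≠ r(j) and P(r(j),j) < e^ε·P_Y(j); moreover the map j ↦ r(j) is a bijection of {1,…,N}. -/
import Mathlib

open scoped BigOperators Classical

noncomputable section

/-- The output distribution `P_Y(j) = ∑ i, p i * P i j` induced by a prior `p`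
and a mechanism `P`. -/
def outDist {N M : ℕ} (p : Fin N → ℝ) (P : Matrix (Fin N) (Fin M) ℝ) (j : Fin M) : ℝ :=
  ∑ i, p i * P i j

/-- A privacy mechanism: nonnegative entries, rows summing to one. -/
def IsMechanism {N M : ℕ} (P : Matrix (Fin N) (Fin M) ℝ) : Prop :=
  (∀ i j, 0 ≤ P i j) ∧ ∀ i, ∑ j, P i j = 1

/-- Pointwise maximal leakage to output `j`:
`ℓ(X → y_j) = log((max_i P i j) / P_Y(j))`. -/
def pml {N M : ℕ} (p : Fin N → ℝ) (P : Matrix (Fin N) (Fin M) ℝ) (j : Fin M) : ℝ :=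
  Real.log ((⨆ i, P i j) / outDist p P j)

/-- `P` satisfies `ε`-PML (w.r.t. prior `p`): the leakage of every output of
positive probability is at most `ε`. -/
def SatisfiesPML {N M : ℕ} (p : Fin N → ℝ) (ε : ℝ) (P : Matrix (Fin N) (Fin M) ℝ) : Prop :=
  ∀ j, 0 < outDist p P j → pml p P j ≤ ε

/-- A sublinear function `μ : [0,∞)^N → [0,∞)`: nonnegative, positively
homogeneous and subadditive on the nonnegative orthant. -/
def Sublinear {N : ℕ} (μ : (Fin N → ℝ) → ℝ) : Prop :=
  (∀ x, (∀ i, 0 ≤ x i) → 0 ≤ μ x) ∧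
  (∀ (c : ℝ), 0 ≤ c → ∀ x, (∀ i, 0 ≤ x i) → μ (c • x) = c * μ x) ∧
  (∀ x y, (∀ i, 0 ≤ x i) → (∀ i, 0 ≤ y i) → μ (x + y) ≤ μ x + μ y)

/-- The sub-convex utility associated with `μ`: `U(P) = ∑ j, μ(P_j)` where
`P_j` is the `j`-th column of `P`. -/
def utility {N M : ℕ} (μ : (Fin N → ℝ) → ℝ) (P : Matrix (Fin N) (Fin M) ℝ) : ℝ :=
  ∑ j, μ (fun i => P i j)

end

open Finset in
/-- Any direction `D` that preserves the row-sum constraints and all the tight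
PML constraints of an extreme point `P` (with positive entries) must vanish. -/
lemma pml_extreme_perturbation_eq_zero {N : ℕ} (hN : 2 ≤ N) (p : Fin N → ℝ)
    (hp0 : ∀ i, 0 ≤ p i)
    (hpsum : ∑ i, p i = 1) (ε : ℝ)
    (P : Matrix (Fin N) (Fin N) ℝ)
    (hext : P ∈ ({Q : Matrix (Fin N) (Fin N) ℝ |
        IsMechanism Q ∧ SatisfiesPML p ε Q}).extremePoints ℝ)
    (hPpos : ∀ i j, 0 < P i j)
    (hle : ∀ i j, P i j ≤ Real.exp ε * outDist p P j)
    (D : Matrix (Fin N) (Fin N) ℝ)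
    (hrow : ∀ i, ∑ j, D i j = 0)
    (htight : ∀ i j, P i j = Real.exp ε * outDist p P j →
      D i j = Real.exp ε * ∑ k, p k * D k j) :
    D = 0 := by
  haveI : NeZero N := ⟨by omega⟩
  have hEpos : 0 < Real.exp ε := Real.exp_pos ε
  set E : ℝ := Real.exp ε with hE
  set q : Fin N → ℝ := outDist p P with hq
  set s : Fin N → ℝ := fun j => ∑ k, p k * D k j with hs
  set B : ℝ := 1 + (∑ i, ∑ j, |D i j|) + ∑ j, E * |s j| with hB
  have habs1 : (0:ℝ) ≤ ∑ i, ∑ j, |D i j| := by positivity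
  have habs2 : (0:ℝ) ≤ ∑ j, E * |s j| := by positivity
  have hB1 : 1 ≤ B := by rw [hB]; linarith
  have hBpos : 0 < B := by linarith
  have hDb : ∀ i j, |D i j| + E * |s j| ≤ B - 1 := by
    intro i j
    have h1 : |D i j| ≤ ∑ i, ∑ j, |D i j| := by
      calc |D i j| ≤ ∑ j, |D i j| :=
            Finset.single_le_sum (f := fun j => |D i j|) (fun k _ => abs_nonneg _) (mem_univ j)
        _ ≤ ∑ i, ∑ j, |D i j| :=
            Finset.single_le_sum (f := fun i => ∑ j, |D i j|) (fun k _ => by positivity) (mem_univ i)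
    have h2 : E * |s j| ≤ ∑ j, E * |s j| :=
      Finset.single_le_sum (f := fun j => E * |s j|) (fun k _ => by positivity) (mem_univ j)
    rw [hB]; linarith
  have hval : ∀ i j, P i j ≠ E * q j → 0 < E * q j - P i j := by
    intro i j hne
    have := lt_of_le_of_ne (hle i j) hne
    linarith
  set val : Fin N × Fin N → ℝ := fun ij =>
    if P ij.1 ij.2 = E * q ij.2 then P ij.1 ij.2
    else min (P ij.1 ij.2) (E * q ij.2 - P ij.1 ij.2) with hvaldef
  have hnemp : (Finset.univ : Finset (Fin N × Fin N)).Nonempty := univ_nonempty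
  set c : ℝ := Finset.univ.inf' hnemp val with hc
  have hcpos : 0 < c := by
    rw [hc, Finset.lt_inf'_iff]
    rintro ⟨i, j⟩ -
    simp only [hvaldef]
    split_ifs with h
    · exact hPpos i j
    · exact lt_min (hPpos i j) (hval i j h)
  have hcle : ∀ i j, c ≤ val (i, j) := fun i j => Finset.inf'_le _ (mem_univ _)
  have hcleP : ∀ i j, c ≤ P i j := by
    intro i j
    refine (hcle i j).trans ?_
    simp only [hvaldef]
    split_ifs with h
    · exact le_refl _
    · exact min_le_left _ _
  have hcslack : ∀ i j, P i j ≠ E * q j → c ≤ E * q j - P i j := by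
    intro i j h
    refine (hcle i j).trans ?_
    simp only [hvaldef]
    rw [if_neg h]
    exact min_le_right _ _
  obtain ⟨hPS, hexx⟩ := mem_extremePoints.mp hext
  obtain ⟨⟨hPnn, hProw⟩, hPpml⟩ := hPS
  have hmem : ∀ t : ℝ, |t| * B ≤ c → (P + t • D) ∈
      {Q : Matrix (Fin N) (Fin N) ℝ | IsMechanism Q ∧ SatisfiesPML p ε Q} := by
    intro t ht
    have hbd : ∀ i j, |t| * |D i j| + |t| * (E * |s j|) ≤ c := by
      intro i j
      have h1 : |t| * (|D i j| + E * |s j|) ≤ |t| * (B - 1) :=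
        mul_le_mul_of_nonneg_left (hDb i j) (abs_nonneg t)
      nlinarith [abs_nonneg t]
    have happ : ∀ i j, (P + t • D) i j = P i j + t * D i j := by
      intro i j
      simp [Matrix.add_apply, Matrix.smul_apply, smul_eq_mul]
    have hout : ∀ j, outDist p (P + t • D) j = q j + t * s j := by
      intro j
      simp only [outDist, happ, mul_add]
      rw [Finset.sum_add_distrib]
      congr 1
      rw [hs]; simp only; rw [Finset.mul_sum]
      exact Finset.sum_congr rfl fun i _ => by ring
    refine ⟨⟨fun i j => ?_, fun i => ?_⟩, fun j hq' => ?_⟩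
    · rw [happ]
      have h1 := hbd i j
      have h2 := hcleP i j
      have h3 : -(|t| * |D i j|) ≤ t * D i j := by
        have := neg_abs_le (t * D i j)
        rw [abs_mul] at this
        linarith
      have h4 : 0 ≤ |t| * (E * |s j|) := by positivity
      linarith
    · simp only [happ]
      rw [Finset.sum_add_distrib, hProw i, ← Finset.mul_sum, hrow i]
      ring
    · have hub : ∀ i, (P + t • D) i j ≤ E * outDist p (P + t • D) j := by
        intro i
        rw [hout, happ]
        by_cases hij : P i j = E * q j
        · have hD := htight i j hij
          have hsj : s j = ∑ k, p k * D k j := rfl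
          exact le_of_eq (by rw [hij, hD, ← hsj]; ring)
        · have h1 := hcslack i j hij
          have h2 := hbd i j
          have h3 : t * D i j ≤ |t| * |D i j| := by
            rw [← abs_mul]; exact le_abs_self _
          have h4 : -(|t| * (E * |s j|)) ≤ E * (t * s j) := by
            have h5 := neg_abs_le (E * (t * s j))
            rw [abs_mul, abs_mul, abs_of_pos hEpos] at h5
            nlinarith [h5]
          nlinarith
      have hii : ∀ i, (P + t • D) i j ≤ ⨆ i, (P + t • D) i j :=
        fun i => le_ciSup (f := fun i => (P + t • D) i j) (Finite.bddAbove_range _) i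
      have hqle : outDist p (P + t • D) j ≤ ⨆ i, (P + t • D) i j := by
        calc outDist p (P + t • D) j = ∑ i, p i * (P + t • D) i j := rfl
          _ ≤ ∑ i, p i * (⨆ i, (P + t • D) i j) :=
              Finset.sum_le_sum fun i _ => mul_le_mul_of_nonneg_left (hii i) (hp0 i)
          _ = ⨆ i, (P + t • D) i j := by rw [← Finset.sum_mul, hpsum, one_mul]
      have hsuple : (⨆ i, (P + t • D) i j) ≤ E * outDist p (P + t • D) j := ciSup_le hub
      show pml p (P + t • D) j ≤ ε
      simp only [pml]
      rw [Real.log_le_iff_le_exp (div_pos (lt_of_lt_of_le hq' hqle) hq'), div_le_iff₀ hq']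
      rw [← hE]
      nlinarith [hsuple, hq']
  set δ : ℝ := c / B with hδ
  have hδpos : 0 < δ := div_pos hcpos hBpos
  have hδB : δ * B = c := div_mul_cancel₀ c hBpos.ne'
  have h1 := hmem δ (by rw [abs_of_pos hδpos]; exact hδB.le)
  have h2 := hmem (-δ) (by rw [abs_neg, abs_of_pos hδpos]; exact hδB.le)
  have hseg : P ∈ openSegment ℝ (P + (-δ) • D) (P + δ • D) := by
    refine ⟨1/2, 1/2, by norm_num, by norm_num, by norm_num, ?_⟩
    module
  have heq := (hexx _ h2 _ h1 hseg).1
  have hzero : (-δ) • D = 0 := by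
    have h3 : P + (-δ) • D = P + 0 := by rw [heq, add_zero]
    exact add_left_cancel h3
  rcases smul_eq_zero.mp hzero with h | h
  · exact absurd h (by simp; exact hδpos.ne')
  · exact h

/-- A homogeneous linear system with more unknowns than equations has a
nontrivial solution. -/
lemma exists_ne_zero_map_eq_zero' {α β : Type} [Fintype α] [Fintype β]
    (f : (α → ℝ) → (β → ℝ))
    (hadd : ∀ x y, f (x + y) = f x + f y)
    (hsmul : ∀ (c : ℝ) (x), f (c • x) = c • f x)
    (hcard : Fintype.card β < Fintype.card α) :
    ∃ x, x ≠ 0 ∧ f x = 0 := by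
  by_contra h
  push_neg at h
  have hker : ∀ x, f x = 0 → x = 0 := by
    intro x hx
    by_contra hne
    exact (h x hne) hx
  let φ : (α → ℝ) →ₗ[ℝ] (β → ℝ) :=
    { toFun := f, map_add' := hadd, map_smul' := hsmul }
  have hinj : Function.Injective φ :=
    LinearMap.ker_eq_bot.mp (LinearMap.ker_eq_bot'.mpr hker)
  have hle := LinearMap.finrank_le_finrank_of_injective hinj
  rw [Module.finrank_pi, Module.finrank_pi] at hle
  omega

/-- **Structure of full-support extreme points in the
high-privacy regime.** If `0 < ε < ε_1(p) = −log(1 − p_N)` and `P` is an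
extreme point of `M_N(ε)` whose columns all have positive output probability,
then each column `j` has a unique non-extremal index `r j`: all other entries
equal `e^ε·P_Y(j)` while `P (r j) j < e^ε·P_Y(j)`, and `j ↦ r j` is a
bijection. -/
theorem extreme_point_structure (N : ℕ) (hN : 2 ≤ N) (p : Fin N → ℝ)
    (hp : ∀ i, 0 < p i) (hpsum : ∑ i, p i = 1)
    (hord : ∀ i j : Fin N, i ≤ j → p j ≤ p i)
    (ε : ℝ) (hε0 : 0 < ε)
    (hε1 : ε < -Real.log (1 - p ⟨N - 1, by omega⟩))
    (P : Matrix (Fin N) (Fin N) ℝ)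
    (hext : P ∈ ({Q : Matrix (Fin N) (Fin N) ℝ |
        IsMechanism Q ∧ SatisfiesPML p ε Q}).extremePoints ℝ)
    (hpos : ∀ j, 0 < outDist p P j) :
    ∃ r : Fin N → Fin N, Function.Bijective r ∧
      (∀ j, (∀ i, i ≠ r j → P i j = Real.exp ε * outDist p P j) ∧
        P (r j) j < Real.exp ε * outDist p P j) ∧
      (∀ j, ∀ r' : Fin N,
        ((∀ i, i ≠ r' → P i j = Real.exp ε * outDist p P j) ∧
          P r' j < Real.exp ε * outDist p P j) → r' = r j) := by
  classical
  haveI : NeZero N := ⟨by omega⟩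
  have hp0 : ∀ i, 0 ≤ p i := fun i => (hp i).le
  have hEpos : 0 < Real.exp ε := Real.exp_pos ε
  set E : ℝ := Real.exp ε with hE
  set q : Fin N → ℝ := outDist p P with hq
  have hE1 : 1 < E := by
    have h := Real.exp_lt_exp.mpr hε0
    rw [Real.exp_zero] at h
    exact h
  obtain ⟨hPS, -⟩ := mem_extremePoints.mp hext
  obtain ⟨⟨hPnn, hProw⟩, hPpml⟩ := hPS
  have hlast_le : ∀ i, p ⟨N - 1, by omega⟩ ≤ p i := by
    intro i
    refine hord i ⟨N - 1, by omega⟩ ?_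
    have := i.isLt
    rw [Fin.le_def]
    simp only
    omega
  have hlt1 : p ⟨N - 1, by omega⟩ < 1 := by
    have h0 : (⟨0, by omega⟩ : Fin N) ≠ ⟨N - 1, by omega⟩ := by
      intro h
      simp only [Fin.mk.injEq] at h
      omega
    have hsub : p ⟨0, by omega⟩ + p ⟨N - 1, by omega⟩ ≤ ∑ i, p i := by
      rw [← Finset.sum_pair h0]
      exact Finset.sum_le_sum_of_subset_of_nonneg (by simp) (fun i _ _ => hp0 i)
    have := hp ⟨0, by omega⟩
    rw [hpsum] at hsub
    linarith
  have hEp : ∀ i, E * (1 - p i) < 1 := by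
    intro i
    have h1 : 0 < 1 - p ⟨N - 1, by omega⟩ := by linarith
    have h2 : E < (1 - p ⟨N - 1, by omega⟩)⁻¹ := by
      rw [hE]
      calc Real.exp ε < Real.exp (-Real.log (1 - p ⟨N - 1, by omega⟩)) :=
            Real.exp_lt_exp.mpr hε1
        _ = (1 - p ⟨N - 1, by omega⟩)⁻¹ := by rw [Real.exp_neg, Real.exp_log h1]
    have h3 : E * (1 - p ⟨N - 1, by omega⟩) < 1 := by
      have h4 := mul_lt_mul_of_pos_right h2 h1
      rw [inv_mul_cancel₀ h1.ne'] at h4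
      exact h4
    have h5 : 1 - p i ≤ 1 - p ⟨N - 1, by omega⟩ := by linarith [hlast_le i]
    nlinarith [mul_le_mul_of_nonneg_left h5 hEpos.le]
  have hle : ∀ i j, P i j ≤ E * q j := by
    intro i j
    have hqj := hpos j
    have hqle : q j ≤ ⨆ i, P i j := by
      calc q j = ∑ i, p i * P i j := rfl
        _ ≤ ∑ i, p i * (⨆ i, P i j) := Finset.sum_le_sum fun i _ =>
            mul_le_mul_of_nonneg_left
              (le_ciSup (f := fun i => P i j) (Finite.bddAbove_range _) i) (hp0 i)
        _ = ⨆ i, P i j := by rw [← Finset.sum_mul, hpsum, one_mul]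
    have hpml := hPpml j hqj
    simp only [pml] at hpml
    rw [Real.log_le_iff_le_exp (div_pos (lt_of_lt_of_le hqj hqle) hqj),
      div_le_iff₀ hqj] at hpml
    calc P i j ≤ ⨆ i, P i j := le_ciSup (f := fun i => P i j) (Finite.bddAbove_range _) i
      _ ≤ E * q j := by rw [hE]; nlinarith [hpml]
  have hPpos : ∀ i j, 0 < P i j := by
    intro i j
    have hsplit : q j = p i * P i j + ∑ k ∈ Finset.univ.erase i, p k * P k j :=
      (Finset.add_sum_erase _ _ (Finset.mem_univ i)).symm
    have hrest : ∑ k ∈ Finset.univ.erase i, p k * P k j ≤ (1 - p i) * (E * q j) := by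
      calc ∑ k ∈ Finset.univ.erase i, p k * P k j
          ≤ ∑ k ∈ Finset.univ.erase i, p k * (E * q j) :=
            Finset.sum_le_sum fun k _ => mul_le_mul_of_nonneg_left (hle k j) (hp0 k)
        _ = (1 - p i) * (E * q j) := by
            rw [← Finset.sum_mul, Finset.sum_erase_eq_sub (Finset.mem_univ i), hpsum]
    have h6 : 0 < 1 - E * (1 - p i) := by linarith [hEp i]
    have h7 : 0 < q j * (1 - E * (1 - p i)) := mul_pos (hpos j) h6
    have h8 : 0 < p i * P i j := by nlinarith [hsplit, hrest, h7]
    nlinarith [hp i, h8]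
  have hnontight : ∀ j, ∃ i, P i j ≠ E * q j := by
    intro j
    by_contra h
    push_neg at h
    have heq : q j = E * q j := by
      calc q j = ∑ i, p i * P i j := rfl
        _ = ∑ i, p i * (E * q j) := Finset.sum_congr rfl fun i _ => by rw [h i]
        _ = E * q j := by rw [← Finset.sum_mul, hpsum, one_mul]
    nlinarith [hpos j, hE1]
  -- STEP C: at most one non-tight entry per column
  have hC : ∀ (j0 i1 i2 : Fin N), i1 ≠ i2 →
      P i1 j0 ≠ E * q j0 → P i2 j0 ≠ E * q j0 → False := by
    intro j0 i1 i2 h12 hnt1 hnt2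
    set w : Fin N → Fin N := fun j =>
      if j = j0 then i1 else Classical.choose (hnontight j) with hw
    have hwnt : ∀ j, P (w j) j ≠ E * q j := by
      intro j
      simp only [hw]
      split_ifs with h
      · subst h; exact hnt1
      · exact Classical.choose_spec (hnontight j)
    have hwj0 : w j0 = i1 := by simp only [hw]; simp
    set T : Fin N → Finset (Fin N) :=
      fun j => Finset.univ.filter (fun i => P i j = E * q j) with hT
    set Pt : Fin N → ℝ := fun j => ∑ i ∈ T j, p i with hPt
    set den : Fin N → ℝ := fun j => 1 - E * Pt j with hden
    have hdenpos : ∀ j, 0 < den j := by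
      intro j
      have hsubT : T j ⊆ Finset.univ.erase (w j) := by
        intro i hi
        rw [Finset.mem_erase]
        refine ⟨?_, Finset.mem_univ i⟩
        rintro rfl
        rw [hT] at hi
        exact hwnt j (by simpa using hi)
      have h1 : Pt j ≤ 1 - p (w j) := by
        calc Pt j = ∑ i ∈ T j, p i := rfl
          _ ≤ ∑ i ∈ Finset.univ.erase (w j), p i :=
              Finset.sum_le_sum_of_subset_of_nonneg hsubT (fun i _ _ => hp0 i)
          _ = 1 - p (w j) := by
              rw [Finset.sum_erase_eq_sub (Finset.mem_univ _), hpsum]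
      have h2 := hEp (w j)
      have h3 : E * Pt j ≤ E * (1 - p (w j)) := mul_le_mul_of_nonneg_left h1 hEpos.le
      have h4 : den j = 1 - E * Pt j := rfl
      rw [h4]
      linarith
    set nn : ((Fin N ⊕ Unit) → ℝ) → Fin N → ℝ := fun x j =>
      p (w j) * x (Sum.inl j) + (if j = j0 then p i2 * x (Sum.inr ()) else 0) with hnn
    set ss : ((Fin N ⊕ Unit) → ℝ) → Fin N → ℝ := fun x j => nn x j / den j with hss
    set DD : ((Fin N ⊕ Unit) → ℝ) → Matrix (Fin N) (Fin N) ℝ := fun x =>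
      Matrix.of fun i j =>
        if P i j = E * q j then E * ss x j
        else if i = w j then x (Sum.inl j)
        else if j = j0 ∧ i = i2 then x (Sum.inr ()) else 0 with hDD
    have happly : ∀ x i j, DD x i j =
        (if P i j = E * q j then E * ss x j
        else if i = w j then x (Sum.inl j)
        else if j = j0 ∧ i = i2 then x (Sum.inr ()) else 0) := fun x i j => rfl
    have hnnapply : ∀ x j, nn x j =
        p (w j) * x (Sum.inl j) + (if j = j0 then p i2 * x (Sum.inr ()) else 0) :=
      fun x j => rfl
    have hssapply : ∀ x j, ss x j = nn x j / den j := fun x j => rfl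
    have hssadd : ∀ x y j, ss (x + y) j = ss x j + ss y j := by
      intro x y j
      rw [hssapply, hssapply, hssapply, ← add_div]
      congr 1
      rw [hnnapply, hnnapply, hnnapply]
      simp only [Pi.add_apply]
      split_ifs <;> ring
    have hsssmul : ∀ (t : ℝ) x j, ss (t • x) j = t * ss x j := by
      intro t x j
      have hnns : nn (t • x) j = t * nn x j := by
        rw [hnnapply, hnnapply]
        simp only [Pi.smul_apply, smul_eq_mul]
        split_ifs <;> ring
      rw [hssapply, hssapply, hnns, mul_div_assoc]
    have hDDadd : ∀ x y, DD (x + y) = DD x + DD y := by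
      intro x y
      funext i j
      rw [Matrix.add_apply, happly, happly, happly]
      simp only [Pi.add_apply, hssadd]
      split_ifs <;> ring
    have hDDsmul : ∀ (t : ℝ) x, DD (t • x) = t • DD x := by
      intro t x
      funext i j
      rw [Matrix.smul_apply, happly, happly]
      simp only [Pi.smul_apply, smul_eq_mul, hsssmul]
      split_ifs <;> ring
    have hsum : ∀ x j, ∑ k, p k * DD x k j = ss x j := by
      intro x j
      have hnden : nn x j = den j * ss x j := by
        rw [hssapply, mul_div_assoc']
        exact (mul_div_cancel_left₀ _ (hdenpos j).ne').symm
      rw [← Finset.sum_filter_add_sum_filter_not Finset.univ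
        (fun i => P i j = E * q j) (fun k => p k * DD x k j)]
      have hA : ∑ k ∈ Finset.univ.filter (fun i => P i j = E * q j), p k * DD x k j
          = Pt j * (E * ss x j) := by
        have h1 : ∀ k ∈ Finset.univ.filter (fun i => P i j = E * q j),
            p k * DD x k j = p k * (E * ss x j) := by
          intro k hk
          rw [happly, if_pos (Finset.mem_filter.mp hk).2]
        rw [Finset.sum_congr rfl h1, ← Finset.sum_mul]
      have hB2 : ∑ k ∈ Finset.univ.filter (fun i => ¬ P i j = E * q j),
          p k * DD x k j = nn x j := by
        by_cases hjj : j = j0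
        · subst hjj
          have h1 : ∀ k ∈ Finset.univ.filter (fun i => ¬ P i j = E * q j),
              p k * DD x k j = (if k = w j then p k * x (Sum.inl j) else 0)
                + (if k = i2 then p k * x (Sum.inr ()) else 0) := by
            intro k hk
            have hkt := (Finset.mem_filter.mp hk).2
            rw [happly, if_neg hkt]
            simp only [true_and]
            split_ifs with hk1 hk2 <;> try ring
            exfalso
            rw [hwj0] at hk1
            exact h12 (hk1.symm.trans hk2)
          rw [Finset.sum_congr rfl h1, Finset.sum_add_distrib]
          have hS1 : ∑ k ∈ Finset.univ.filter (fun i => ¬ P i j = E * q j),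
              (if k = w j then p k * x (Sum.inl j) else 0) = p (w j) * x (Sum.inl j) := by
            rw [Finset.sum_eq_single_of_mem (w j)
              (Finset.mem_filter.mpr ⟨Finset.mem_univ _, hwnt j⟩)
              (fun b _ hb => if_neg hb), if_pos rfl]
          have hS2 : ∑ k ∈ Finset.univ.filter (fun i => ¬ P i j = E * q j),
              (if k = i2 then p k * x (Sum.inr ()) else 0) = p i2 * x (Sum.inr ()) := by
            rw [Finset.sum_eq_single_of_mem i2
              (Finset.mem_filter.mpr ⟨Finset.mem_univ _, hnt2⟩)
              (fun b _ hb => if_neg hb), if_pos rfl]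
          rw [hS1, hS2, hnnapply, if_pos rfl]
        · have h1 : ∀ k ∈ Finset.univ.filter (fun i => ¬ P i j = E * q j),
              p k * DD x k j = (if k = w j then p k * x (Sum.inl j) else 0) := by
            intro k hk
            have hkt := (Finset.mem_filter.mp hk).2
            rw [happly, if_neg hkt]
            split_ifs with hk1 hk2
            · rfl
            · exact absurd hk2.1 hjj
            · exact mul_zero _
          rw [Finset.sum_congr rfl h1]
          rw [Finset.sum_eq_single_of_mem (w j)
            (Finset.mem_filter.mpr ⟨Finset.mem_univ _, hwnt j⟩)
            (fun b _ hb => if_neg hb), if_pos rfl, hnnapply, if_neg hjj, add_zero]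
      rw [hA, hB2, hnden]
      have h4 : den j = 1 - E * Pt j := rfl
      rw [h4]
      ring
    have htightD : ∀ x i j, P i j = E * q j →
        DD x i j = E * ∑ k, p k * DD x k j := by
      intro x i j hij
      rw [hsum, happly, if_pos hij]
    obtain ⟨x, hx0, hfx⟩ := exists_ne_zero_map_eq_zero'
      (f := fun x => fun i => ∑ j, DD x i j)
      (by
        intro x y
        funext i
        simp only [hDDadd, Matrix.add_apply, Pi.add_apply]
        exact Finset.sum_add_distrib)
      (by
        intro t x
        funext i
        simp only [hDDsmul, Matrix.smul_apply, Pi.smul_apply, smul_eq_mul]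
        exact (Finset.mul_sum _ _ _).symm)
      (by simp)
    have hrowD : ∀ i, ∑ j, DD x i j = 0 := fun i => congrFun hfx i
    have hkey := pml_extreme_perturbation_eq_zero hN p hp0 hpsum ε P hext hPpos hle
      (DD x) hrowD (fun i j hij => htightD x i j hij)
    have hzero : ∀ i j, DD x i j = 0 := by
      intro i j
      have := congrFun (congrFun hkey i) j
      simpa using this
    apply hx0
    funext k
    cases k with
    | inl j =>
      have h1 : DD x (w j) j = x (Sum.inl j) := by
        rw [happly, if_neg (hwnt j), if_pos rfl]
      simp only [Pi.zero_apply]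
      rw [← h1, hzero (w j) j]
    | inr u =>
      cases u
      have hne2 : ¬ (i2 = w j0) := by
        rw [hwj0]; exact fun h => h12 h.symm
      have h1 : DD x i2 j0 = x (Sum.inr ()) := by
        rw [happly, if_neg hnt2, if_neg hne2, if_pos ⟨rfl, rfl⟩]
      simp only [Pi.zero_apply]
      rw [← h1, hzero i2 j0]
  -- the non-tight index of each column
  set r : Fin N → Fin N := fun j => Classical.choose (hnontight j) with hr
  have hrne : ∀ j, P (r j) j ≠ E * q j := fun j => Classical.choose_spec (hnontight j)
  have hstruct : ∀ j i, i ≠ r j → P i j = E * q j := by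
    intro j i hi
    by_contra hcon
    exact hC j i (r j) hi hcon (hrne j)
  -- STEP D: injectivity of r
  have hinj : Function.Injective r := by
    intro j1 j2 hr12
    by_contra hne
    set i0 : Fin N := r j1 with hi0
    have hnt1 : P i0 j1 ≠ E * q j1 := hrne j1
    have hnt2 : P i0 j2 ≠ E * q j2 := by rw [hr12]; exact hrne j2
    have hdγ : 0 < 1 - E * (1 - p i0) := by linarith [hEp i0]
    set γ : ℝ := p i0 / (1 - E * (1 - p i0)) with hγ
    have hγden : γ * (1 - E * (1 - p i0)) = p i0 := div_mul_cancel₀ _ hdγ.ne'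
    set D : Matrix (Fin N) (Fin N) ℝ := Matrix.of fun i j =>
      (if j = j1 then (if i = i0 then 1 else E * γ) else 0)
      + (if j = j2 then (if i = i0 then -1 else -(E * γ)) else 0) with hD
    have hDapp : ∀ i j, D i j =
        (if j = j1 then (if i = i0 then 1 else E * γ) else 0)
        + (if j = j2 then (if i = i0 then -1 else -(E * γ)) else 0) := fun i j => rfl
    have hrowD : ∀ i, ∑ j, D i j = 0 := by
      intro i
      simp only [hDapp]
      rw [Finset.sum_add_distrib, Finset.sum_ite_eq', Finset.sum_ite_eq',
        if_pos (Finset.mem_univ _), if_pos (Finset.mem_univ _)]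
      split_ifs <;> ring
    have hsum1 : ∑ k, p k * D k j1 = γ := by
      have h1 : ∀ k, p k * D k j1 = (if k = i0 then p k * 1 else p k * (E * γ)) := by
        intro k
        rw [hDapp, if_pos rfl, if_neg hne]
        split_ifs <;> ring
      rw [Finset.sum_congr rfl (fun k _ => h1 k),
        ← Finset.add_sum_erase _ _ (Finset.mem_univ i0), if_pos rfl]
      have h2 : ∀ k ∈ Finset.univ.erase i0,
          (if k = i0 then p k * 1 else p k * (E * γ)) = p k * (E * γ) := by
        intro k hk
        rw [if_neg (Finset.mem_erase.mp hk).1]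
      rw [Finset.sum_congr rfl h2, ← Finset.sum_mul,
        Finset.sum_erase_eq_sub (Finset.mem_univ i0), hpsum]
      linear_combination -hγden
    have hsum2 : ∑ k, p k * D k j2 = -γ := by
      have h1 : ∀ k, p k * D k j2 = (if k = i0 then p k * (-1) else p k * (-(E * γ))) := by
        intro k
        rw [hDapp, if_neg (fun h => hne h.symm), if_pos rfl]
        split_ifs <;> ring
      rw [Finset.sum_congr rfl (fun k _ => h1 k),
        ← Finset.add_sum_erase _ _ (Finset.mem_univ i0), if_pos rfl]
      have h2 : ∀ k ∈ Finset.univ.erase i0,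
          (if k = i0 then p k * (-1) else p k * (-(E * γ))) = p k * (-(E * γ)) := by
        intro k hk
        rw [if_neg (Finset.mem_erase.mp hk).1]
      rw [Finset.sum_congr rfl h2, ← Finset.sum_mul,
        Finset.sum_erase_eq_sub (Finset.mem_univ i0), hpsum]
      linear_combination hγden
    have htightD : ∀ i j, P i j = E * q j → D i j = E * ∑ k, p k * D k j := by
      intro i j hij
      by_cases hj1 : j = j1
      · subst hj1
        have hii0 : i ≠ i0 := fun h => hnt1 (h ▸ hij)
        rw [hsum1]
        simp [hDapp, hne, hii0]
      · by_cases hj2 : j = j2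
        · subst hj2
          have hii0 : i ≠ i0 := fun h => hnt2 (h ▸ hij)
          rw [hsum2]
          simp [hDapp, hj1, hii0]
        · have hz : ∀ k, D k j = 0 := by
            intro k
            rw [hDapp, if_neg hj1, if_neg hj2, add_zero]
          simp [hz]
    have hkey := pml_extreme_perturbation_eq_zero hN p hp0 hpsum ε P hext hPpos hle
      D hrowD htightD
    have h1 : D i0 j1 = 1 := by
      rw [hDapp, if_pos rfl, if_pos rfl, if_neg hne, add_zero]
    rw [hkey] at h1
    simp at h1
  refine ⟨r, Finite.injective_iff_bijective.mp hinj, ?_, ?_⟩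
  · intro j
    exact ⟨fun i hi => hstruct j i hi, lt_of_le_of_ne (hle (r j) j) (hrne j)⟩
  · rintro j r' ⟨-, hlt⟩
    by_contra hne
    exact absurd (hstruct j r' hne) (ne_of_lt hlt)
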